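/- arXiv:2212.06534 — 3 statements merged into one kernel-verified Lean document; each statement's English description precedes it below -/
import Mathlib

section
/- If f, g ∈ L²(ℝⁿ) have compact supports and f*g = 0 almost everywhere on ℝⁿ, then f = 0 almost everywhere or g = 0 almost everywhere (i.e., convolution of compactly supported L² functions has no zero divisors). -/
open MeasureTheory Set Filter Pointwise

/-- Convolution of two real-valued functions on ℝⁿ. -/
noncomputable def conv {n : ℕ} (f g : (Fin n → ℝ) → ℝ) : (Fin n → ℝ) → ℝ :=
  fun s => ∫ t, f (s - t) * g t

/-- Essential support (w.r.t. Lebesgue measure) of a function on ℝⁿ. -/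
noncomputable def essSupp {n : ℕ} (f : (Fin n → ℝ) → ℝ) : Set (Fin n → ℝ) :=
  {x | ∀ r > 0, volume {y ∈ Metric.ball x r | f y ≠ 0} ≠ 0}

/-!
Compactly supported `L²` functions are integrable, and the Fourier transform turns `f ⋆ g = 0`
into `𝓕 f · 𝓕 g = 0`. If `g` vanishes outside a bounded set, `t ↦ 𝓕 g (ξ + t • d)` extends to an
entire function of `t`, so it is real-analytic on every line. If `𝓕 f ≠ 0` somewhere, it is nonzero
on an open set, where `𝓕 g` vanishes; analyticity along the lines through a point of that set
forces `𝓕 g ≡ 0`. Injectivity of the Fourier transform on `L¹` gives `f = 0` or `g = 0` a.e.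
-/

open Complex Bornology WithLp ContinuousLinearMap
open scoped FourierTransform RealInnerProductSpace SchwartzMap Topology Convolution

theorem differentiable_integral_cexp_mul {α : Type*} [MeasurableSpace α] {μ : Measure α}
    {s c : α → ℂ} (hs : AEStronglyMeasurable s μ) (hc : Integrable c μ) {B : ℝ}
    (hB : ∀ᵐ x ∂μ, c x ≠ 0 → ‖s x‖ ≤ B) :
    Differentiable ℂ fun z : ℂ => ∫ x, cexp (z * s x) * c x ∂μ := by
  intro z₀
  have hmeas : ∀ z : ℂ, AEStronglyMeasurable (fun x => cexp (z * s x) * c x) μ := fun z =>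
    (Complex.continuous_exp.comp_aestronglyMeasurable (hs.const_mul z)).mul hc.1
  have hle : ∀ᵐ x ∂μ, ∀ z : ℂ, ‖z‖ ≤ ‖z₀‖ + 1 →
      ‖s x * (cexp (z * s x) * c x)‖ ≤ B * Real.exp ((‖z₀‖ + 1) * B) * ‖c x‖ ∧
      ‖cexp (z * s x) * c x‖ ≤ Real.exp ((‖z₀‖ + 1) * B) * ‖c x‖ := by
    filter_upwards [hB] with x hx z hz
    rcases eq_or_ne (c x) 0 with h0 | h0
    · simp [h0]
    have hsx := hx h0
    have hB0 : 0 ≤ B := (norm_nonneg _).trans hsx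
    have hexp : ‖cexp (z * s x)‖ ≤ Real.exp ((‖z₀‖ + 1) * B) :=
      (norm_exp_le_exp_norm _).trans <| Real.exp_le_exp.mpr <| (norm_mul z (s x)).trans_le <|
        mul_le_mul hz hsx (norm_nonneg _) (by positivity)
    simp only [norm_mul, mul_assoc]
    exact ⟨by gcongr, by gcongr⟩
  have hball : ∀ z ∈ Metric.ball z₀ 1, ‖z‖ ≤ ‖z₀‖ + 1 := fun z hz => by
    have := norm_le_norm_add_norm_sub' z z₀
    rw [Metric.mem_ball, dist_eq_norm] at hz
    linarith
  refine (hasDerivAt_integral_of_dominated_loc_of_deriv_le (Metric.ball_mem_nhds z₀ one_pos)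
    (F' := fun z x => s x * (cexp (z * s x) * c x))
    (Eventually.of_forall hmeas) ?_ (hs.mul (hmeas z₀)) ?_
    (hc.norm.const_mul (B * Real.exp ((‖z₀‖ + 1) * B))) ?_).2.differentiableAt
  · refine (hc.norm.const_mul (Real.exp ((‖z₀‖ + 1) * B))).mono' (hmeas z₀) ?_
    filter_upwards [hle] with x hx using (hx z₀ (by linarith)).2
  · filter_upwards [hle] with x hx z hz using (hx z (hball z hz)).1
  · refine ae_of_all _ fun x z _ => ?_
    have h := ((hasDerivAt_mul_const (s x)).cexp).mul_const (c x) (x := z)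
    rwa [show cexp (z * s x) * s x * c x = s x * (cexp (z * s x) * c x) by ring] at h

section InnerProductSpace

variable {V : Type*} [NormedAddCommGroup V] [InnerProductSpace ℝ V] [FiniteDimensional ℝ V]
  [MeasurableSpace V] [BorelSpace V]

/- Every test function `ψ` is `𝓕 (𝓕⁻ ψ)` with `𝓕⁻ ψ` a Schwartz function, and
`∫ G · 𝓕 φ = ∫ 𝓕 G · φ`. -/
theorem MeasureTheory.Integrable.ae_eq_zero_of_fourier_eq_zero {G : V → ℂ} (hG : Integrable G)
    (h : 𝓕 G = 0) : G =ᵐ[volume] 0 := by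
  refine ae_eq_zero_of_integral_contDiff_smul_eq_zero hG.locallyIntegrable fun ψ hψ hψc => ?_
  set Ψ : 𝓢(V, ℂ) := (hψc.comp_left ofReal_zero).toSchwartzMap (ofRealCLM.contDiff.comp hψ)
  have hΨ : ∀ x, (ψ x : ℂ) = 𝓕 (𝓕⁻ Ψ) x := fun x => by
    rw [FourierTransform.fourier_fourierInv_eq]; rfl
  have hswap := VectorFourier.integral_bilin_fourierIntegral_eq_flip (mul ℂ ℂ)
    (L := innerₗ V) Real.continuous_fourierChar continuous_inner hG
    ((𝓕⁻ Ψ).integrable (μ := volume))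
  rw [flip_innerₗ] at hswap
  calc ∫ x, ψ x • G x = ∫ x, G x * 𝓕 (𝓕⁻ Ψ) x := by
        congr 1; ext x; rw [← hΨ, Complex.real_smul, mul_comm]
    _ = ∫ ξ, 𝓕 G ξ * 𝓕⁻ Ψ ξ := hswap.symm
    _ = 0 := by simp [h]

theorem analyticAt_fourier_add_smul {G : V → ℂ} (hG : Integrable G) {K : Set V}
    (hK : IsBounded K) (hGK : ∀ᵐ v, v ∉ K → G v = 0) (ξ d : V) (t₀ : ℝ) :
    AnalyticAt ℝ (fun t : ℝ => 𝓕 G (ξ + t • d)) t₀ := by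
  obtain ⟨R, hR⟩ := hK.subset_closedBall 0
  set s : V → ℂ := fun v => ↑(-2 * Real.pi * ⟪v, d⟫) * I
  set c : V → ℂ := fun v => (𝐞 (-⟪v, ξ⟫) : ℂ) * G v
  have hc : Integrable c := by
    simpa only [Circle.smul_def, smul_eq_mul] using (Real.fourierIntegral_convergent_iff ξ).2 hG
  have hs : Continuous s := by fun_prop
  have hB : ∀ᵐ v, c v ≠ 0 → ‖s v‖ ≤ 2 * Real.pi * (R * ‖d‖) := by
    filter_upwards [hGK] with v hv hcv
    have hvR : ‖v‖ ≤ R := mem_closedBall_zero_iff.mp <| hR <| not_not.mp <| mt hv <|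
      right_ne_zero_of_mul hcv
    have : |⟪v, d⟫| ≤ R * ‖d‖ := (abs_real_inner_le_norm v d).trans (by gcongr)
    simp only [s, norm_mul, norm_I, mul_one, norm_real, Real.norm_eq_abs, abs_neg, abs_two,
      abs_of_pos Real.pi_pos]
    gcongr
  have hline : ∀ t : ℝ, 𝓕 G (ξ + t • d) = ∫ v, cexp (t * s v) * c v := fun t => by
    rw [Real.fourier_eq]
    congr 1
    ext v
    simp only [s, c, Circle.smul_def, Real.fourierChar_apply, smul_eq_mul, ← mul_assoc,
      ← Complex.exp_add]
    congr 2
    rw [inner_add_right, real_inner_smul_right]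
    push_cast
    ring
  simp_rw [hline]
  exact ((differentiable_integral_cexp_mul hs.aestronglyMeasurable hc hB).analyticAt
    (t₀ : ℂ)).restrictScalars.comp (ofRealCLM.analyticAt t₀)

theorem ae_eq_zero_or_ae_eq_zero_of_fourier_mul_eq_zero {F G : V → ℂ} (hF : Integrable F)
    (hG : Integrable G) {K : Set V} (hK : IsBounded K) (hGK : ∀ᵐ v, v ∉ K → G v = 0)
    (h : ∀ ξ, 𝓕 F ξ * 𝓕 G ξ = 0) : F =ᵐ[volume] 0 ∨ G =ᵐ[volume] 0 := by
  by_cases hF0 : 𝓕 F = 0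
  · exact .inl (hF.ae_eq_zero_of_fourier_eq_zero hF0)
  refine .inr (hG.ae_eq_zero_of_fourier_eq_zero (funext fun ξ => ?_))
  obtain ⟨ξ₀, hξ₀⟩ : ∃ ξ₀, 𝓕 F ξ₀ ≠ 0 := by
    by_contra! h'
    exact hF0 (funext h')
  have hcont : Continuous fun t : ℝ => 𝓕 F (ξ₀ + t • (ξ - ξ₀)) :=
    (VectorFourier.fourierIntegral_continuous Real.continuous_fourierChar continuous_inner hF).comp
      (by fun_prop)
  have hnear : ∀ᶠ t in 𝓝 (0 : ℝ), 𝓕 G (ξ₀ + t • (ξ - ξ₀)) = 0 :=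
    (hcont.continuousAt.eventually_ne (by simpa using hξ₀)).mono fun t ht =>
      (mul_eq_zero.mp (h _)).resolve_left ht
  have han : AnalyticOnNhd ℝ (fun t : ℝ => 𝓕 G (ξ₀ + t • (ξ - ξ₀))) univ := fun t _ =>
    analyticAt_fourier_add_smul hG hK hGK ξ₀ (ξ - ξ₀) t
  simpa using han.eqOn_zero_of_preconnected_of_eventuallyEq_zero isPreconnected_univ
    (mem_univ 0) hnear (mem_univ 1)

theorem ae_eq_zero_or_ae_eq_zero_of_convolution_eq_zero {F G : V → ℂ} (hF : Integrable F)
    (hG : Integrable G) {K : Set V} (hK : IsBounded K) (hGK : ∀ᵐ v, v ∉ K → G v = 0)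
    (h : F ⋆[mul ℂ ℂ] G =ᵐ[volume] 0) : F =ᵐ[volume] 0 ∨ G =ᵐ[volume] 0 :=
  ae_eq_zero_or_ae_eq_zero_of_fourier_mul_eq_zero hF hG hK hGK fun ξ => by
    rw [← Real.fourier_mul_convolution_eq hF hG ξ, Real.fourier_congr_ae h]
    simp [Real.fourier_eq]

end InnerProductSpace

/- The Fourier transform needs the Euclidean inner product, whereas `ι → ℝ` carries the sup norm;
we pass through the volume-preserving `ofLp : EuclideanSpace ℝ ι → (ι → ℝ)`. -/
theorem Pi.ae_eq_zero_or_ae_eq_zero_of_convolution_eq_zero {ι : Type*} [Fintype ι]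
    {φ ψ : (ι → ℝ) → ℝ} (hφ : Integrable φ) (hψ : Integrable ψ) {K : Set (ι → ℝ)}
    (hK : IsBounded K) (hψK : ∀ᵐ y, y ∉ K → ψ y = 0) (h : φ ⋆[mul ℝ ℝ] ψ =ᵐ[volume] 0) :
    φ =ᵐ[volume] 0 ∨ ψ =ᵐ[volume] 0 := by
  have hofLp := PiLp.volume_preserving_ofLp ι
  have htoLp := (PiLp.volume_preserving_toLp ι).quasiMeasurePreserving
  let lift : ((ι → ℝ) → ℝ) → EuclideanSpace ℝ ι → ℂ := fun χ x => (χ (ofLp x) : ℂ)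
  have lift_integrable {χ : (ι → ℝ) → ℝ} (hχ : Integrable χ) : Integrable (lift χ) :=
    hofLp.integrable_comp_of_integrable hχ.ofReal
  have lift_convolution : lift φ ⋆[mul ℂ ℂ] lift ψ = lift (φ ⋆[mul ℝ ℝ] ψ) := by
    ext x
    simp only [lift, convolution_def, mul_apply', ofLp_sub, ← ofReal_mul]
    rw [integral_complex_ofReal]
    congr 1
    exact (EuclideanSpace.volume_preserving_symm_measurableEquiv_toLp ι).integral_comp'
      (fun t => φ t * ψ (ofLp x - t))
  have lift_eq_zero {χ : (ι → ℝ) → ℝ} (hχ : lift χ =ᵐ[volume] 0) : χ =ᵐ[volume] 0 := by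
    filter_upwards [htoLp.ae_eq hχ] with y hy
    simpa [lift] using hy
  refine (_root_.ae_eq_zero_or_ae_eq_zero_of_convolution_eq_zero (lift_integrable hφ)
    (lift_integrable hψ) ((PiLp.antilipschitzWith_ofLp 2 _).isBounded_preimage hK) ?_ ?_).imp
    lift_eq_zero lift_eq_zero
  · filter_upwards [hofLp.quasiMeasurePreserving.ae hψK] with x hx hxK
    simp [lift, hx hxK]
  · rw [lift_convolution]
    filter_upwards [hofLp.quasiMeasurePreserving.ae_eq h] with x hx
    simpa [lift] using hx

theorem ae_notMem_essSupp_eq_zero {n : ℕ} (f : (Fin n → ℝ) → ℝ) :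
    ∀ᵐ x, x ∉ essSupp f → f x = 0 := by
  simp only [ae_iff, Classical.not_imp]
  refine measure_null_of_locally_null _ fun x hx => ?_
  obtain ⟨r, hr, hr0⟩ : ∃ r > 0, volume {y ∈ Metric.ball x r | f y ≠ 0} = 0 := by
    simpa [essSupp] using hx.1
  exact ⟨_, inter_mem_nhdsWithin _ (Metric.ball_mem_nhds x hr),
    measure_mono_null (fun y hy => show y ∈ {y ∈ Metric.ball x r | f y ≠ 0} from
      ⟨hy.2, hy.1.2⟩) hr0⟩

theorem conv_eq_convolution {n : ℕ} (f g : (Fin n → ℝ) → ℝ) :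
    conv f g = g ⋆[mul ℝ ℝ] f := by
  ext s
  simp only [conv, convolution_def, mul_apply', mul_comm]

theorem conv_no_zero_divisors {n : ℕ} (f g : (Fin n → ℝ) → ℝ)
    (hf : MemLp f 2 volume) (hg : MemLp g 2 volume)
    (hfc : IsCompact (essSupp f)) (hgc : IsCompact (essSupp g))
    (h0 : conv f g =ᵐ[volume] 0) :
    f =ᵐ[volume] 0 ∨ g =ᵐ[volume] 0 := by
  have hf1 : Integrable f := ((hf.locallyIntegrable one_le_two).integrableOn_isCompact
    hfc).integrable_of_ae_notMem_eq_zero (ae_notMem_essSupp_eq_zero f)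
  have hg1 : Integrable g := ((hg.locallyIntegrable one_le_two).integrableOn_isCompact
    hgc).integrable_of_ae_notMem_eq_zero (ae_notMem_essSupp_eq_zero g)
  rw [conv_eq_convolution] at h0
  exact (Pi.ae_eq_zero_or_ae_eq_zero_of_convolution_eq_zero hg1 hf1 hfc.isBounded
    (ae_notMem_essSupp_eq_zero f) h0).symm
end

section
/- For all s ∈ [0,1] and k ∈ ℕ, the bound 0 ≤ ∫₀ˢ sin(k² t²) dt ≤ √π / k holds; consequently ∫₀ˢ sin(k²t²) dt → 0 uniformly in s as k → ∞. -/
/-! Let `S x = ∫₀ˣ sin (u²) du` and `c = √π`. On `[0, c]` the integrand lies in `[0, 1]`, so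
`0 ≤ S x ≤ x ≤ c`. Beyond `c`, integrating by parts with the primitive `(±1 - cos (u²)) / (2u)`,
whose error term `(cos (u²) ∓ 1) / (2u²)` has a constant sign, gives
`-1/c ≤ S x - S c ≤ 0` because `cos (c²) = -1`. Finally `S c ≥ 1/c`, since on `[0, c]`
`sin (u²) ≥ (u/c) sin (u²)`, whose integral is `(1 - cos π) / (2c)`. The substitution `u = k t`
turns the integral of the theorem into `S (k s) / k`. -/

open MeasureTheory Set Filter intervalIntegral Real Topology

noncomputable def fresnelS (x : ℝ) : ℝ := ∫ u in (0 : ℝ)..x, sin (u ^ 2)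

lemma continuous_sin_comp_sq : Continuous fun u : ℝ => sin (u ^ 2) := by fun_prop

lemma fresnelS_sub_fresnelS (a b : ℝ) :
    fresnelS b - fresnelS a = ∫ u in a..b, sin (u ^ 2) :=
  integral_interval_sub_left (continuous_sin_comp_sq.intervalIntegrable _ _)
    (continuous_sin_comp_sq.intervalIntegrable _ _)

lemma sin_comp_sq_nonneg_of_le {u x : ℝ} (hu : 0 ≤ u) (hux : u ≤ x) (hxπ : x ^ 2 ≤ π) :
    0 ≤ sin (u ^ 2) :=
  sin_nonneg_of_nonneg_of_le_pi (sq_nonneg u) ((pow_le_pow_left₀ hu hux 2).trans hxπ)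

lemma fresnelS_nonneg_of_sq_le_pi {x : ℝ} (hx : 0 ≤ x) (hxπ : x ^ 2 ≤ π) : 0 ≤ fresnelS x :=
  integral_nonneg hx fun _ hu => sin_comp_sq_nonneg_of_le hu.1 hu.2 hxπ

lemma fresnelS_le_self {x : ℝ} (hx : 0 ≤ x) : fresnelS x ≤ x := by
  calc fresnelS x ≤ ∫ _ in (0 : ℝ)..x, (1 : ℝ) :=
        integral_mono_on hx (continuous_sin_comp_sq.intervalIntegrable _ _)
          intervalIntegrable_const fun u _ => sin_le_one _
    _ = x := by simp

lemma one_sub_cos_sq_div_le_fresnelS {a : ℝ} (ha : 0 < a) (haπ : a ^ 2 ≤ π) :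
    (1 - cos (a ^ 2)) / (2 * a) ≤ fresnelS a := by
  have hderiv : ∀ u, HasDerivAt (fun u => (1 - cos (u ^ 2)) / (2 * a))
      (sin (u ^ 2) * (u / a)) u := fun u => by
    refine ((((hasDerivAt_pow 2 u).cos).const_sub 1).div_const (2 * a)).congr_deriv ?_
    field_simp
    ring
  have hle := sub_le_integral_of_hasDeriv_right_of_le ha.le
    (fun u _ => (hderiv u).continuousAt.continuousWithinAt)
    (fun u _ => (hderiv u).hasDerivWithinAt) continuous_sin_comp_sq.integrableOn_Icc
    fun _ hu => mul_le_of_le_one_right (sin_comp_sq_nonneg_of_le hu.1.le hu.2.le haπ)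
      ((div_le_one ha).2 hu.2.le)
  simpa [fresnelS] using hle

lemma hasDerivAt_sub_cos_comp_sq_div (ε : ℝ) {u : ℝ} (hu : u ≠ 0) :
    HasDerivAt (fun u => (ε - cos (u ^ 2)) / (2 * u))
      (sin (u ^ 2) + (cos (u ^ 2) - ε) / (2 * u ^ 2)) u := by
  refine ((((hasDerivAt_pow 2 u).cos).const_sub ε).div
    ((hasDerivAt_id u).const_mul 2) (mul_ne_zero two_ne_zero hu)).congr_deriv ?_
  simp only [id, Nat.cast_ofNat]
  field_simp
  ring

lemma fresnelS_sub_fresnelS_le {a b : ℝ} (ha : 0 < a) (hab : a ≤ b) :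
    fresnelS b - fresnelS a ≤ (1 + cos (a ^ 2)) / (2 * a) := by
  have hpos : ∀ u ∈ Icc a b, 0 < u := fun u hu => ha.trans_le hu.1
  have hle := integral_le_sub_of_hasDeriv_right_of_le hab
    (fun u hu =>
      (hasDerivAt_sub_cos_comp_sq_div (-1) (hpos u hu).ne').continuousAt.continuousWithinAt)
    (fun u hu =>
      (hasDerivAt_sub_cos_comp_sq_div (-1) (hpos u (Ioo_subset_Icc_self hu)).ne').hasDerivWithinAt)
    continuous_sin_comp_sq.integrableOn_Icc
    fun u _ => le_add_of_nonneg_right <|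
      div_nonneg (by linarith [neg_one_le_cos (u ^ 2)]) (by positivity)
  have hb : (-1 - cos (b ^ 2)) / (2 * b) ≤ 0 :=
    div_nonpos_of_nonpos_of_nonneg (by linarith [neg_one_le_cos (b ^ 2)])
      (by linarith [hpos b ⟨hab, le_rfl⟩])
  have ha' : (-1 - cos (a ^ 2)) / (2 * a) = -((1 + cos (a ^ 2)) / (2 * a)) := by ring
  rw [fresnelS_sub_fresnelS]
  linarith

lemma neg_one_sub_cos_sq_div_le_fresnelS_sub_fresnelS {a b : ℝ} (ha : 0 < a) (hab : a ≤ b) :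
    -((1 - cos (a ^ 2)) / (2 * a)) ≤ fresnelS b - fresnelS a := by
  have hpos : ∀ u ∈ Icc a b, 0 < u := fun u hu => ha.trans_le hu.1
  have hle := sub_le_integral_of_hasDeriv_right_of_le hab
    (fun u hu =>
      (hasDerivAt_sub_cos_comp_sq_div 1 (hpos u hu).ne').continuousAt.continuousWithinAt)
    (fun u hu =>
      (hasDerivAt_sub_cos_comp_sq_div 1 (hpos u (Ioo_subset_Icc_self hu)).ne').hasDerivWithinAt)
    continuous_sin_comp_sq.integrableOn_Icc
    fun u _ => add_le_of_nonpos_right <|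
      div_nonpos_of_nonpos_of_nonneg (by linarith [cos_le_one (u ^ 2)]) (by positivity)
  have hb : 0 ≤ (1 - cos (b ^ 2)) / (2 * b) :=
    div_nonneg (by linarith [cos_le_one (b ^ 2)]) (by linarith [hpos b ⟨hab, le_rfl⟩])
  rw [fresnelS_sub_fresnelS]
  linarith

lemma fresnelS_nonneg {x : ℝ} (hx : 0 ≤ x) : 0 ≤ fresnelS x := by
  have hc : 0 < √π := sqrt_pos.2 pi_pos
  have hc2 : √π ^ 2 = π := sq_sqrt pi_pos.le
  rcases le_total x √π with hxc | hcx
  · exact fresnelS_nonneg_of_sq_le_pi hx ((pow_le_pow_left₀ hx hxc 2).trans hc2.le)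
  · have head := one_sub_cos_sq_div_le_fresnelS hc hc2.le
    have tail := neg_one_sub_cos_sq_div_le_fresnelS_sub_fresnelS hc hcx
    linarith

lemma fresnelS_le_sqrt_pi {x : ℝ} (hx : 0 ≤ x) : fresnelS x ≤ √π := by
  have hc : 0 < √π := sqrt_pos.2 pi_pos
  rcases le_total x √π with hxc | hcx
  · exact (fresnelS_le_self hx).trans hxc
  · have tail := fresnelS_sub_fresnelS_le hc hcx
    rw [sq_sqrt pi_pos.le, cos_pi, add_neg_cancel, zero_div] at tail
    linarith [fresnelS_le_self hc.le]

lemma integral_sin_mul_sq_eq_fresnelS {k : ℝ} (hk : k ≠ 0) (s : ℝ) :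
    ∫ t in (0 : ℝ)..s, sin (k ^ 2 * t ^ 2) = k⁻¹ * fresnelS (k * s) := by
  simp_rw [← mul_pow]
  simpa [fresnelS] using integral_comp_mul_left (fun u => sin (u ^ 2)) hk (a := 0) (b := s)

lemma integral_sin_mul_sq_mem_Icc {k s : ℝ} (hk : 0 < k) (hs : 0 ≤ s) :
    ∫ t in (0 : ℝ)..s, sin (k ^ 2 * t ^ 2) ∈ Icc 0 (√π / k) := by
  have hks := mul_nonneg hk.le hs
  rw [integral_sin_mul_sq_eq_fresnelS hk.ne', div_eq_inv_mul]
  exact ⟨mul_nonneg (inv_nonneg.2 hk.le) (fresnelS_nonneg hks),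
    mul_le_mul_of_nonneg_left (fresnelS_le_sqrt_pi hks) (inv_nonneg.2 hk.le)⟩

lemma tendstoUniformlyOn_of_dist_le {ι α β : Type*} [PseudoMetricSpace β] {p : Filter ι}
    {F : ι → α → β} {f : α → β} {s : Set α} {u : ι → ℝ} (hu : Tendsto u p (𝓝 0))
    (hF : ∀ᶠ n in p, ∀ x ∈ s, dist (f x) (F n x) ≤ u n) : TendstoUniformlyOn F f p s := by
  rw [Metric.tendstoUniformlyOn_iff]
  intro ε hε
  filter_upwards [hF, hu.eventually (gt_mem_nhds hε)] with n hn hun x hx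
  exact (hn x hx).trans_lt hun

theorem fresnel_integral_bound :
    (∀ s ∈ Set.Icc (0 : ℝ) 1, ∀ k : ℕ, 1 ≤ k →
      0 ≤ ∫ t in (0 : ℝ)..s, Real.sin ((k : ℝ)^2 * t^2) ∧
      (∫ t in (0 : ℝ)..s, Real.sin ((k : ℝ)^2 * t^2)) ≤ Real.sqrt Real.pi / (k : ℝ)) ∧
    TendstoUniformlyOn (fun (k : ℕ) (s : ℝ) => ∫ t in (0 : ℝ)..s, Real.sin ((k : ℝ)^2 * t^2))
      0 atTop (Set.Icc (0 : ℝ) 1) := by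
  have bound : ∀ s ∈ Icc (0 : ℝ) 1, ∀ k : ℕ, 1 ≤ k →
      ∫ t in (0 : ℝ)..s, sin ((k : ℝ) ^ 2 * t ^ 2) ∈ Icc 0 (√π / k) :=
    fun s hs k hk => integral_sin_mul_sq_mem_Icc (by exact_mod_cast hk) hs.1
  refine ⟨bound, tendstoUniformlyOn_of_dist_le (tendsto_const_div_atTop_nhds_zero_nat √π) ?_⟩
  filter_upwards [eventually_ge_atTop 1] with k hk s hs
  obtain ⟨h0, hle⟩ := bound s hs k hk
  simpa [Real.dist_eq, abs_of_nonneg h0] using hle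
end

section
/- The autoconvolutions of h_k(t) = √2·r·sin(k²t²)·𝟙_{[0,1]}(t) converge to zero in L²([0,2]): there is a constant C > 0 such that |[h_k*h_k](ξ)| ≤ C/k for all ξ ∈ [0,2] and all k ∈ ℕ, hence ‖h_k*h_k‖_{L²([0,2])} → 0 as k → ∞. -/
open MeasureTheory Set Filter Pointwise

/-- Convolution of two real-valued functions on ℝ. -/
noncomputable def conv1 (f g : ℝ → ℝ) : ℝ → ℝ :=
  fun s => ∫ t, f (s - t) * g t

/-!
Writing `2 sin(k²(ξ-t)²) sin(k²t²)` as a difference of cosines, the difference of the phases is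
linear in `t` with slope `-2k²ξ`, and their sum is the quadratic phase `2k²(t-ξ/2)² + k²ξ²/2`.
The linear part integrates to `O(1/(k²ξ))`, which together with the trivial bound `ξ` gives
`O(1/k)`. The quadratic part is a Fresnel integral: after scaling by `√(2k²)`, it is bounded by
the uniform bound on `∫ₐᵇ cos(v² + β) dv`, obtained by integrating by parts against `1/(2v)` away
from the origin. The uniform bound `C/k` on `[0, 2]` then controls the `L²` norm.
-/

open Real Topology intervalIntegral

lemma abs_integral_cos_sq_add_le_inv {β c x : ℝ} (hc : 0 < c) (hcx : c ≤ x) :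
    |∫ v in c..x, cos (v ^ 2 + β)| ≤ c⁻¹ := by
  have hpos : ∀ v ∈ uIcc c x, 0 < v := fun v hv =>
    hc.trans_le (by rw [uIcc_of_le hcx] at hv; exact hv.1)
  have hu : ∀ v ∈ uIcc c x, HasDerivAt (fun v => (2 * v)⁻¹) (-(2 * v ^ 2)⁻¹) v := by
    intro v hv
    have h := (hasDerivAt_inv (hpos v hv).ne').const_mul (2⁻¹ : ℝ)
    simp only [← mul_inv] at h
    exact h.congr_deriv (by ring)
  have hs : ∀ v ∈ uIcc c x,
      HasDerivAt (fun v => sin (v ^ 2 + β)) (cos (v ^ 2 + β) * (2 * v)) v :=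
    fun v _ => by simpa using ((hasDerivAt_pow 2 v).add_const β).sin
  have hcont : ContinuousOn (fun v : ℝ => (2 * v ^ 2)⁻¹) (uIcc c x) :=
    (continuousOn_const.mul (continuousOn_pow 2)).inv₀ fun v hv =>
      mul_ne_zero two_ne_zero (pow_ne_zero 2 (hpos v hv).ne')
  have hparts := intervalIntegral.integral_mul_deriv_eq_deriv_mul hu hs
    hcont.neg.intervalIntegrable
    ((by fun_prop : Continuous fun v : ℝ => cos (v ^ 2 + β) * (2 * v)).intervalIntegrable _ _)
  have hrem : |∫ v in c..x, -(2 * v ^ 2)⁻¹ * sin (v ^ 2 + β)| ≤ (2 * c)⁻¹ - (2 * x)⁻¹ := by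
    have hint : ∫ v in c..x, (2 * v ^ 2)⁻¹ = (2 * c)⁻¹ - (2 * x)⁻¹ := by
      rw [integral_eq_sub_of_hasDerivAt (f := fun v => -(2 * v)⁻¹)
        (fun v hv => (hu v hv).neg.congr_deriv (neg_neg _)) hcont.intervalIntegrable]
      ring
    rw [← hint, ← Real.norm_eq_abs]
    refine norm_integral_le_of_norm_le hcx (ae_of_all _ fun v hv => ?_) hcont.intervalIntegrable
    rw [norm_mul, norm_neg, Real.norm_eq_abs, Real.norm_eq_abs, abs_of_pos (by
      have := hc.trans hv.1; positivity)]
    exact mul_le_of_le_one_right (by positivity) (abs_sin_le_one _)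
  have hbdry : ∀ v, 0 < v → |(2 * v)⁻¹ * sin (v ^ 2 + β)| ≤ (2 * v)⁻¹ := fun v hv => by
    rw [abs_mul, abs_of_pos (by positivity)]
    exact mul_le_of_le_one_right (by positivity) (abs_sin_le_one _)
  -- `cos (v² + β) = (2v)⁻¹ · (sin (v² + β))'`; integrate by parts
  have hcongr : ∫ v in c..x, cos (v ^ 2 + β) =
      ∫ v in c..x, (2 * v)⁻¹ * (cos (v ^ 2 + β) * (2 * v)) :=
    integral_congr fun v hv => by have := (hpos v hv).ne'; field_simp
  rw [hcongr, hparts]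
  have hx_bdry := hbdry x (hc.trans_le hcx)
  have hc_bdry := hbdry c hc
  have hhalf : (2 * c)⁻¹ + (2 * c)⁻¹ = c⁻¹ := by field_simp; ring
  calc _ ≤ |(2 * x)⁻¹ * sin (x ^ 2 + β)| + |(2 * c)⁻¹ * sin (c ^ 2 + β)|
        + |∫ v in c..x, -(2 * v ^ 2)⁻¹ * sin (v ^ 2 + β)| :=
          (abs_sub _ _).trans (add_le_add_left (abs_sub _ _) _)
    _ ≤ c⁻¹ := by linarith

lemma abs_integral_cos_sq_add_le_two_of_nonneg {β x : ℝ} (hx : 0 ≤ x) :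
    |∫ v in 0..x, cos (v ^ 2 + β)| ≤ 2 := by
  have htrivial : ∀ a b : ℝ, |∫ v in a..b, cos (v ^ 2 + β)| ≤ |b - a| := fun a b => by
    simpa using norm_integral_le_of_norm_le_const (C := 1) (f := fun v => cos (v ^ 2 + β))
      fun v _ => abs_cos_le_one _
  rcases le_or_gt x 1 with hx1 | hx1
  · linarith [htrivial 0 x, abs_of_nonneg (sub_nonneg.2 hx)]
  · have hint : ∀ a b : ℝ, IntervalIntegrable (fun v => cos (v ^ 2 + β)) volume a b :=
      (by fun_prop : Continuous fun v : ℝ => cos (v ^ 2 + β)).intervalIntegrable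
    rw [← integral_add_adjacent_intervals (hint 0 1) (hint 1 x)]
    have h01 := htrivial 0 1
    have h1x := abs_integral_cos_sq_add_le_inv (β := β) one_pos hx1.le
    norm_num at h01 h1x
    exact (abs_add_le _ _).trans (by linarith)

lemma abs_integral_cos_sq_add_le_four (β a b : ℝ) : |∫ v in a..b, cos (v ^ 2 + β)| ≤ 4 := by
  have hprim : ∀ x : ℝ, |∫ v in 0..x, cos (v ^ 2 + β)| ≤ 2 := fun x => by
    rcases le_total 0 x with hx | hx
    · exact abs_integral_cos_sq_add_le_two_of_nonneg hx
    · have heven := integral_comp_neg (a := 0) (b := x) fun v => cos (v ^ 2 + β)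
      simp only [neg_sq, neg_zero] at heven
      rw [heven, integral_symm, abs_neg]
      exact abs_integral_cos_sq_add_le_two_of_nonneg (neg_nonneg.2 hx)
  have hint : ∀ a b : ℝ, IntervalIntegrable (fun v => cos (v ^ 2 + β)) volume a b :=
    (by fun_prop : Continuous fun v : ℝ => cos (v ^ 2 + β)).intervalIntegrable
  rw [← integral_interval_sub_left (hint 0 b) (hint 0 a)]
  linarith [abs_sub (∫ v in 0..b, cos (v ^ 2 + β)) (∫ v in 0..a, cos (v ^ 2 + β)),
    hprim a, hprim b]

lemma abs_integral_cos_mul_sub_sq_add_le {α : ℝ} (hα : 0 < α) (β m a b : ℝ) :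
    |∫ t in a..b, cos (α * (t - m) ^ 2 + β)| ≤ 4 / √α := by
  have hsqrt : 0 < √α := sqrt_pos.2 hα
  have hsub : ∀ t, α * (t - m) ^ 2 + β = (√α * t - √α * m) ^ 2 + β := fun t => by
    rw [← mul_sub, mul_pow, sq_sqrt hα.le]
  simp_rw [hsub]
  rw [integral_comp_mul_sub (fun v => cos (v ^ 2 + β)) hsqrt.ne', smul_eq_mul, abs_mul,
    abs_inv, abs_of_pos hsqrt, inv_mul_eq_div]
  gcongr
  exact abs_integral_cos_sq_add_le_four _ _ _

lemma abs_integral_cos_add_mul_le {γ : ℝ} (hγ : γ ≠ 0) (β a b : ℝ) :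
    |∫ t in a..b, cos (β + γ * t)| ≤ 2 / |γ| := by
  rw [integral_comp_add_mul cos hγ, integral_cos, smul_eq_mul, abs_mul, abs_inv,
    inv_mul_eq_div]
  gcongr
  linarith [abs_sub (sin (β + γ * b)) (sin (β + γ * a)), abs_sin_le_one (β + γ * b),
    abs_sin_le_one (β + γ * a)]

lemma conv1_indicator_Icc_eq_intervalIntegral (f g : ℝ → ℝ) {ξ : ℝ}
    (hξ : ξ ∈ Icc (0 : ℝ) 2) :
    conv1 ((Icc 0 1).indicator f) ((Icc 0 1).indicator g) ξ =
      ∫ t in max (ξ - 1) 0..min ξ 1, f (ξ - t) * g t := by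
  have hshift : ∀ t,
      (Icc 0 1).indicator f (ξ - t) = (Icc (ξ - 1) ξ).indicator (f <| ξ - ·) t := fun t => by
    by_cases ht : t ∈ Icc (ξ - 1) ξ
    · rw [indicator_of_mem ht, indicator_of_mem (by constructor <;> linarith [ht.1, ht.2])]
    · rw [indicator_of_notMem ht,
        indicator_of_notMem fun h => ht ⟨by linarith [h.2], by linarith [h.1]⟩]
  have hle : max (ξ - 1) 0 ≤ min ξ 1 := max_le (le_min (by linarith) (by linarith [hξ.2]))
    (le_min hξ.1 zero_le_one)
  simp only [conv1, hshift, ← inter_indicator_mul]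
  rw [MeasureTheory.integral_indicator (measurableSet_Icc.inter measurableSet_Icc),
    Icc_inter_Icc, integral_Icc_eq_integral_Ioc, ← integral_of_le hle]

lemma abs_integral_cos_add_neg_mul_le_inv {k ξ : ℝ} (hk : 0 < k) {a b : ℝ}
    (hab : |b - a| ≤ ξ) (β : ℝ) :
    |∫ t in a..b, cos (β + -(2 * k ^ 2 * ξ) * t)| ≤ 1 / k := by
  rcases le_or_gt (k * ξ) 1 with hsmall | hlarge
  · have h := norm_integral_le_of_norm_le_const (a := a) (b := b) (C := 1)
      (f := fun t => cos (β + -(2 * k ^ 2 * ξ) * t)) fun t _ => abs_cos_le_one _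
    rw [Real.norm_eq_abs, one_mul] at h
    exact h.trans (hab.trans (by rw [le_div_iff₀ hk]; linarith))
  · have hξ' : 0 < ξ := by nlinarith
    calc _ ≤ 2 / |-(2 * k ^ 2 * ξ)| :=
          abs_integral_cos_add_mul_le (neg_ne_zero.2 (by positivity)) β a b
      _ = 1 / k / (k * ξ) := by
        rw [abs_neg, abs_of_pos (by positivity)]
        field_simp
      _ ≤ 1 / k := div_le_self (by positivity) hlarge.le

lemma abs_integral_sin_sq_mul_sin_sq_le {k ξ : ℝ} (hk : 0 < k) (hξ : ξ ∈ Icc (0 : ℝ) 2) :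
    |∫ t in max (ξ - 1) 0..min ξ 1, sin (k ^ 2 * (ξ - t) ^ 2) * sin (k ^ 2 * t ^ 2)|
      ≤ 5 / (2 * k) := by
  set a := max (ξ - 1) 0
  set b := min ξ 1
  have hsum : ∀ t, sin (k ^ 2 * (ξ - t) ^ 2) * sin (k ^ 2 * t ^ 2) =
      (cos (k ^ 2 * ξ ^ 2 + -(2 * k ^ 2 * ξ) * t)
        - cos (2 * k ^ 2 * (t - ξ / 2) ^ 2 + k ^ 2 * ξ ^ 2 / 2)) / 2 := fun t => by
    rw [eq_div_iff two_ne_zero, mul_comm, ← mul_assoc, two_mul_sin_mul_sin]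
    ring_nf
  have hlin : |∫ t in a..b, cos (k ^ 2 * ξ ^ 2 + -(2 * k ^ 2 * ξ) * t)| ≤ 1 / k := by
    refine abs_integral_cos_add_neg_mul_le_inv hk ?_ _
    have ha : 0 ≤ a := le_max_right _ _
    have ha' : a ≤ ξ := max_le (by linarith) hξ.1
    have hb : 0 ≤ b := le_min hξ.1 zero_le_one
    have hb' : b ≤ ξ := min_le_left _ _
    rw [abs_le]
    constructor <;> linarith
  have hquad :
      |∫ t in a..b, cos (2 * k ^ 2 * (t - ξ / 2) ^ 2 + k ^ 2 * ξ ^ 2 / 2)| ≤ 4 / k := by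
    refine (abs_integral_cos_mul_sub_sq_add_le (by positivity) _ _ _ _).trans ?_
    gcongr
    exact le_sqrt_of_sq_le (by nlinarith)
  simp_rw [hsum]
  rw [intervalIntegral.integral_div, intervalIntegral.integral_sub
    ((by fun_prop : Continuous _).intervalIntegrable _ _)
    ((by fun_prop : Continuous _).intervalIntegrable _ _), abs_div, abs_two]
  calc _ ≤ (1 / k + 4 / k) / 2 := by gcongr; exact (abs_sub _ _).trans (add_le_add hlin hquad)
    _ = 5 / (2 * k) := by field_simp; ring

lemma abs_conv1_indicator_sin_sq_le (r : ℝ) {k : ℝ} (hk : 0 < k) {ξ : ℝ}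
    (hξ : ξ ∈ Icc (0 : ℝ) 2) :
    |conv1 ((Icc 0 1).indicator fun t => √2 * r * sin (k ^ 2 * t ^ 2))
      ((Icc 0 1).indicator fun t => √2 * r * sin (k ^ 2 * t ^ 2)) ξ| ≤ 5 * r ^ 2 / k := by
  rw [conv1_indicator_Icc_eq_intervalIntegral _ _ hξ]
  have hconst : ∀ t, √2 * r * sin (k ^ 2 * (ξ - t) ^ 2) * (√2 * r * sin (k ^ 2 * t ^ 2)) =
      2 * r ^ 2 * (sin (k ^ 2 * (ξ - t) ^ 2) * sin (k ^ 2 * t ^ 2)) := fun t => by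
    linear_combination (r ^ 2 * sin (k ^ 2 * (ξ - t) ^ 2) * sin (k ^ 2 * t ^ 2)) *
      mul_self_sqrt (zero_le_two : (0 : ℝ) ≤ 2)
  simp_rw [hconst]
  rw [intervalIntegral.integral_const_mul, abs_mul, abs_of_nonneg (by positivity)]
  calc _ ≤ 2 * r ^ 2 * (5 / (2 * k)) := by
        gcongr; exact abs_integral_sin_sq_mul_sin_sq_le hk hξ
    _ = 5 * r ^ 2 / k := by field_simp

lemma tendsto_eLpNorm_zero_of_norm_le {α E ι : Type*} [MeasurableSpace α] {μ : Measure α}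
    [IsFiniteMeasure μ] [NormedAddCommGroup E] {p : ENNReal} {l : Filter ι} {F : ι → α → E}
    {ε : ι → ℝ} (hε : Tendsto ε l (𝓝 0)) (hF : ∀ᶠ i in l, ∀ᵐ x ∂μ, ‖F i x‖ ≤ ε i) :
    Tendsto (fun i => eLpNorm (F i) p μ) l (𝓝 0) := by
  have hlim : Tendsto (fun i => μ univ ^ p.toReal⁻¹ * ENNReal.ofReal (ε i)) l (𝓝 0) := by
    have := ENNReal.Tendsto.const_mul (a := μ univ ^ p.toReal⁻¹) (ENNReal.tendsto_ofReal hε)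
      (Or.inr (ENNReal.rpow_ne_top_of_nonneg (by positivity) (measure_ne_top μ univ)))
    simpa using this
  refine tendsto_of_tendsto_of_tendsto_of_le_of_le' tendsto_const_nhds hlim
    (Eventually.of_forall fun _ => zero_le) ?_
  filter_upwards [hF] with i hi using eLpNorm_le_of_ae_bound hi

theorem autoconv_sin_sequence_to_zero (r : ℝ) (hr : 0 < r)
    (h : ℕ → ℝ → ℝ)
    (hdef : ∀ k, h k = Set.indicator (Set.Icc (0 : ℝ) 1)
      (fun t => Real.sqrt 2 * r * Real.sin ((k : ℝ)^2 * t^2))) :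
    (∃ C > (0 : ℝ), ∀ k : ℕ, 1 ≤ k → ∀ ξ ∈ Set.Icc (0 : ℝ) 2,
      |conv1 (h k) (h k) ξ| ≤ C / (k : ℝ)) ∧
    Tendsto (fun k => eLpNorm (conv1 (h k) (h k)) 2 (volume.restrict (Set.Icc (0 : ℝ) 2)))
      atTop (nhds 0) := by
  have hbound : ∀ k : ℕ, 1 ≤ k → ∀ ξ ∈ Icc (0 : ℝ) 2, |conv1 (h k) (h k) ξ| ≤ 5 * r ^ 2 / k :=
    fun k hk ξ hξ => hdef k ▸ abs_conv1_indicator_sin_sq_le r (by exact_mod_cast hk) hξ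
  refine ⟨⟨5 * r ^ 2, by positivity, hbound⟩, ?_⟩
  refine tendsto_eLpNorm_zero_of_norm_le (tendsto_const_div_atTop_nhds_zero_nat (5 * r ^ 2)) ?_
  filter_upwards [eventually_ge_atTop 1] with k hk
  exact (ae_restrict_iff' measurableSet_Icc).2 (ae_of_all _ (hbound k hk))
end
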